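/- Every language recognized with unbounded error by a Nayak quantum finite automaton is a stochastic language. -/

import Mathlib

open Matrix
noncomputable section

/-- A probabilistic finite automaton: row-stochastic matrices, an initial
probability distribution, and a set of accepting states (0/1 final vector). -/
structure PFA (Alph : Type) where
  m : ℕ
  v : Fin m → ℝ
  hv_nonneg : ∀ i, 0 ≤ v i
  hv_sum : ∑ i, v i = 1
  A : Alph → Matrix (Fin m) (Fin m) ℝ
  hA_nonneg : ∀ σ i j, 0 ≤ A σ i j
  hA_rows : ∀ σ i, ∑ j, A σ i j = 1
  F : Finset (Fin m)

/-- Acceptance probability of a PFA on a word. -/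
def PFA.val {Alph : Type} (P : PFA Alph) (w : List Alph) : ℝ :=
  P.v ⬝ᵥ ((w.map P.A).prod).mulVec (fun i => if i ∈ P.F then (1 : ℝ) else 0)

/-- A language is stochastic if it is the strict cutpoint language of some PFA,
with cutpoint `λ ∈ [0,1)`. -/
def IsStochasticLang {Alph : Type} (L : Set (List Alph)) : Prop :=
  ∃ (P : PFA Alph) (lam : ℝ), 0 ≤ lam ∧ lam < 1 ∧ L = { w | lam < P.val w }
/-- A Nayak quantum finite automaton: on each symbol it applies a unitary `U σ`,
then the projective measurement `{P σ i}`, then the projective measurement with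
outcomes accept/reject/non-halting given by orthogonal projections `Pa, Pr, Pn`. -/
structure NQFA (Alph : Type) where
  n : ℕ
  U : Alph → Matrix (Fin n) (Fin n) ℂ
  hU : ∀ σ, U σ ∈ Matrix.unitaryGroup (Fin n) ℂ
  outcomes : ℕ
  P : Alph → Fin outcomes → Matrix (Fin n) (Fin n) ℂ
  hP_herm : ∀ σ i, (P σ i).IsHermitian
  hP_idem : ∀ σ i, P σ i * P σ i = P σ i
  hP_sum : ∀ σ, ∑ i, P σ i = 1
  Pa : Matrix (Fin n) (Fin n) ℂ
  Pr : Matrix (Fin n) (Fin n) ℂ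
  Pn : Matrix (Fin n) (Fin n) ℂ
  hPa : Pa.IsHermitian ∧ Pa * Pa = Pa
  hPr : Pr.IsHermitian ∧ Pr * Pr = Pr
  hPn : Pn.IsHermitian ∧ Pn * Pn = Pn
  hHalt_sum : Pa + Pr + Pn = 1
  init : Fin n → ℂ
  hinit : ∑ i, Complex.normSq (init i) = 1

namespace NQFA

variable {Alph : Type} (M : NQFA Alph)

/-- The initial density matrix `|q₀⟩⟨q₀|`. -/
def rho0 : Matrix (Fin M.n) (Fin M.n) ℂ :=
  fun i j => M.init i * star (M.init j)

/-- The post-operation density matrix for one symbol: apply the unitary,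
then sum over the outcomes of the symbol's projective measurement. -/
def postOp (σ : Alph) (X : Matrix (Fin M.n) (Fin M.n) ℂ) :
    Matrix (Fin M.n) (Fin M.n) ℂ :=
  ∑ i, M.P σ i * (M.U σ * X * (M.U σ)ᴴ) * (M.P σ i)ᴴ

/-- One full computation step on the state `(ρ, p_acc, p_rej)`: the non-halted
density matrix together with accumulated accept and reject probabilities. -/
def step (s : Matrix (Fin M.n) (Fin M.n) ℂ × ℝ × ℝ) (σ : Alph) :
    Matrix (Fin M.n) (Fin M.n) ℂ × ℝ × ℝ :=
  (M.Pn * M.postOp σ s.1 * M.Pnᴴ,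
   s.2.1 + (Matrix.trace (M.Pa * M.postOp σ s.1)).re,
   s.2.2 + (Matrix.trace (M.Pr * M.postOp σ s.1)).re)

/-- Running the NQFA on a word. -/
def run (w : List Alph) : Matrix (Fin M.n) (Fin M.n) ℂ × ℝ × ℝ :=
  w.foldl M.step (M.rho0, 0, 0)

/-- The acceptance probability function of the NQFA. -/
def accProb (w : List Alph) : ℝ := (M.run w).2.1

/-- The total rejection probability of the NQFA. -/
def rejProb (w : List Alph) : ℝ := (M.run w).2.2

/-- The density matrix of the non-halted part of the computation. -/
def curRho (w : List Alph) : Matrix (Fin M.n) (Fin M.n) ℂ := (M.run w).1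

end NQFA

/-!
After each symbol the pair (non-halting density matrix, accumulated acceptance probability) is
transformed by an `ℝ`-linear map, so in a basis of this finite-dimensional real space the acceptance
probability is the value `v A_w f` of a generalized automaton with arbitrary real entries.

Turakainen's construction turns such a cutpoint language, when it excludes the empty word, into a
stochastic one. Adjoining states moves the cutpoint to `0`, makes the initial vector a point mass
and the final vector `0/1` (changing only the value on the empty word), and bordering the matrices
makes all their row and column sums vanish. For such `B σ` and the uniform stochastic matrix `J`,
the matrices `J + t_σ • B σ` are stochastic once `t_σ > 0` is small, and since
`J * B σ = B σ * J = 0`, their value on a nonempty word is `(∑ f) / N + (∏ t) (v B_w f)`: it exceeds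
the cutpoint `(∑ f) / N` exactly when `v B_w f > 0`.
-/

theorem List.prod_map_add_of_isIdempotentElem {R ι : Type*} [Semiring R] {J : R}
    (hJ : IsIdempotentElem J) {B : ι → R} (hJB : ∀ i, J * B i = 0) (hBJ : ∀ i, B i * J = 0)
    {l : List ι} (hl : l ≠ []) :
    (l.map fun i => J + B i).prod = J + (l.map B).prod := by
  have key : ∀ l : List ι, ∀ X : R, X * J = 0 →
      (J + X) * (l.map fun i => J + B i).prod = J + X * (l.map B).prod := by
    intro l
    induction l with
    | nil => simp
    | cons i l ih =>
      intro X hX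
      have hstep : (J + X) * (J + B i) = J + X * B i := by
        simp [mul_add, add_mul, hJ.eq, hJB, hX]
      rw [List.map_cons, List.prod_cons, ← mul_assoc, hstep,
        ih _ (by rw [mul_assoc, hBJ, mul_zero]), List.map_cons, List.prod_cons, mul_assoc]
  obtain ⟨i, l, rfl⟩ := List.exists_cons_of_ne_nil hl
  simpa using key l (B i) (hBJ i)

theorem List.prod_map_smul {K R ι : Type*} [CommSemiring K] [Semiring R] [Algebra K R]
    (t : ι → K) (B : ι → R) (l : List ι) :
    (l.map fun i => t i • B i).prod = (l.map t).prod • (l.map B).prod := by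
  induction l with
  | nil => simp
  | cons i l ih => simp [ih, smul_smul, mul_comm]

theorem Matrix.exists_pos_add_mul_nonneg {m n : Type*} [Fintype m] [Fintype n]
    (B : Matrix m n ℝ) {a : ℝ} (ha : 0 < a) : ∃ t > 0, ∀ i j, 0 ≤ a + t * B i j := by
  set s := ∑ i, ∑ j, |B i j|
  have hs : 0 ≤ s := by positivity
  refine ⟨a / (1 + s), by positivity, fun i j => ?_⟩
  have hB : |B i j| ≤ s :=
    (Finset.single_le_sum (fun j _ => abs_nonneg (B i j)) (Finset.mem_univ j)).trans
      (Finset.single_le_sum (f := fun i => ∑ j, |B i j|) (fun i _ => by positivity)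
        (Finset.mem_univ i))
  have ht : a / (1 + s) * (1 + s) = a := by field_simp
  nlinarith [neg_abs_le (B i j), div_pos ha (show 0 < 1 + s by linarith)]

section LineSums

variable {Alph : Type} {S : Type*} [Fintype S]

def uniformMatrix (S : Type*) [Fintype S] : Matrix S S ℝ :=
  of fun _ _ => (Fintype.card S : ℝ)⁻¹

lemma isIdempotentElem_uniformMatrix [Nonempty S] : IsIdempotentElem (uniformMatrix S) := by
  ext i j
  simp [uniformMatrix, mul_apply]

lemma uniformMatrix_mul_eq_zero {B : Matrix S S ℝ} (hB : ∀ j, ∑ i, B i j = 0) :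
    uniformMatrix S * B = 0 := by
  ext i j
  simp [uniformMatrix, mul_apply, ← Finset.mul_sum, hB]

lemma mul_uniformMatrix_eq_zero {B : Matrix S S ℝ} (hB : ∀ i, ∑ j, B i j = 0) :
    B * uniformMatrix S = 0 := by
  ext i j
  simp [uniformMatrix, mul_apply, ← Finset.sum_mul, hB]

lemma dotProduct_uniformMatrix_mulVec {v : S → ℝ} (hv : ∑ i, v i = 1) (f : S → ℝ) :
    v ⬝ᵥ uniformMatrix S *ᵥ f = (Fintype.card S : ℝ)⁻¹ * ∑ i, f i := by
  simp [uniformMatrix, mulVec, dotProduct, ← Finset.mul_sum, ← Finset.sum_mul, hv]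

-- In block form `[[0, 0, 0], [-A 𝟙, A, 0], [𝟙ᵀ A 𝟙, -𝟙ᵀ A, 0]]`: every row and column sums to
-- zero, and row vectors `(a, x, 0)` evolve in the middle block exactly as `x` does under `A`.
def zeroSumBorder (A : Alph → Matrix S S ℝ) (σ : Alph) :
    Matrix (Unit ⊕ (S ⊕ Unit)) (Unit ⊕ (S ⊕ Unit)) ℝ :=
  of fun
    | .inl _, _ => 0
    | .inr (.inl i), .inl _ => -∑ j, A σ i j
    | .inr (.inl i), .inr (.inl j) => A σ i j
    | .inr (.inl _), .inr (.inr _) => 0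
    | .inr (.inr _), .inl _ => ∑ i, ∑ j, A σ i j
    | .inr (.inr _), .inr (.inl j) => -∑ i, A σ i j
    | .inr (.inr _), .inr (.inr _) => 0

lemma zeroSumBorder_row_sum (A : Alph → Matrix S S ℝ) (σ : Alph) (p : Unit ⊕ (S ⊕ Unit)) :
    ∑ q, zeroSumBorder A σ p q = 0 := by
  rcases p with _ | _ | _
  · simp [zeroSumBorder]
  · simp [zeroSumBorder, Fintype.sum_sum_type]
  · simp [zeroSumBorder, Fintype.sum_sum_type, Finset.sum_comm (f := fun i j => A σ i j)]

lemma zeroSumBorder_col_sum (A : Alph → Matrix S S ℝ) (σ : Alph) (q : Unit ⊕ (S ⊕ Unit)) :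
    ∑ p, zeroSumBorder A σ p q = 0 := by
  rcases q with _ | _ | _ <;> simp [zeroSumBorder, Fintype.sum_sum_type]

end LineSums

section GeneralizedAutomaton

variable {Alph : Type} {S : Type*} [Fintype S] [DecidableEq S]

def gpfaVal (v : S → ℝ) (A : Alph → Matrix S S ℝ) (f : S → ℝ) (w : List Alph) : ℝ :=
  v ⬝ᵥ (w.map A).prod *ᵥ f

@[simp]
lemma gpfaVal_nil (v : S → ℝ) (A : Alph → Matrix S S ℝ) (f : S → ℝ) :
    gpfaVal v A f [] = v ⬝ᵥ f := by
  simp [gpfaVal]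

def PFA.ofFintype (v : S → ℝ) (hv0 : ∀ i, 0 ≤ v i) (hv1 : ∑ i, v i = 1)
    (A : Alph → Matrix S S ℝ) (hA0 : ∀ σ i j, 0 ≤ A σ i j) (hA1 : ∀ σ i, ∑ j, A σ i j = 1)
    (F : Finset S) : PFA Alph where
  m := Fintype.card S
  v := v ∘ (Fintype.equivFin S).symm
  hv_nonneg _ := hv0 _
  hv_sum := (Equiv.sum_comp _ v).trans hv1
  A σ := reindex (Fintype.equivFin S) (Fintype.equivFin S) (A σ)
  hA_nonneg _ _ _ := hA0 _ _ _
  hA_rows σ _ := (Equiv.sum_comp _ _).trans (hA1 σ _)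
  F := F.map (Fintype.equivFin S).toEmbedding

lemma PFA.val_ofFintype (v : S → ℝ) (hv0 : ∀ i, 0 ≤ v i) (hv1 : ∑ i, v i = 1)
    (A : Alph → Matrix S S ℝ) (hA0 : ∀ σ i j, 0 ≤ A σ i j) (hA1 : ∀ σ i, ∑ j, A σ i j = 1)
    (F : Finset S) (w : List Alph) :
    (PFA.ofFintype v hv0 hv1 A hA0 hA1 F).val w =
      gpfaVal v A (fun i => if i ∈ F then 1 else 0) w := by
  set e := Fintype.equivFin S
  have hprod : (w.map fun σ => reindex e e (A σ)).prod = reindex e e (w.map A).prod := by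
    rw [← coe_reindexAlgEquiv ℝ ℝ, map_list_prod, List.map_map]
    rfl
  change (v ∘ e.symm) ⬝ᵥ (w.map fun σ => reindex e e (A σ)).prod *ᵥ
    (fun i => if i ∈ F.map e.toEmbedding then (1 : ℝ) else 0) = _
  rw [hprod, reindex_apply, submatrix_mulVec_equiv, comp_equiv_symm_dotProduct]
  simp [gpfaVal, Function.comp_def]

lemma gpfaVal_uniformMatrix_add_smul [Nonempty S] {v : S → ℝ} (hv : ∑ i, v i = 1)
    {B : Alph → Matrix S S ℝ} (hrow : ∀ σ i, ∑ j, B σ i j = 0) (hcol : ∀ σ j, ∑ i, B σ i j = 0)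
    (t : Alph → ℝ) (f : S → ℝ) {w : List Alph} (hw : w ≠ []) :
    gpfaVal v (fun σ => uniformMatrix S + t σ • B σ) f w =
      (Fintype.card S : ℝ)⁻¹ * ∑ i, f i + (w.map t).prod * gpfaVal v B f w := by
  have hJB σ : uniformMatrix S * t σ • B σ = 0 := by
    rw [Matrix.mul_smul, uniformMatrix_mul_eq_zero (hcol σ), smul_zero]
  have hBJ σ : t σ • B σ * uniformMatrix S = 0 := by
    rw [Matrix.smul_mul, mul_uniformMatrix_eq_zero (hrow σ), smul_zero]
  rw [gpfaVal, List.prod_map_add_of_isIdempotentElem isIdempotentElem_uniformMatrix hJB hBJ hw,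
    List.prod_map_smul, add_mulVec, dotProduct_add, dotProduct_uniformMatrix_mulVec hv,
    smul_mulVec, dotProduct_smul, smul_eq_mul, gpfaVal]

theorem isStochasticLang_of_line_sums_eq_zero [Nonempty S] {v : S → ℝ} (hv0 : ∀ i, 0 ≤ v i)
    (hv1 : ∑ i, v i = 1) {B : Alph → Matrix S S ℝ} (hrow : ∀ σ i, ∑ j, B σ i j = 0)
    (hcol : ∀ σ j, ∑ i, B σ i j = 0) {f : S → ℝ} (hf : ∀ i, f i = 0 ∨ f i = 1)
    (hf0 : ∃ i, f i = 0) (hnil : v ⬝ᵥ f ≤ 0) :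
    IsStochasticLang {w | 0 < gpfaVal v B f w} := by
  set N : ℝ := (Fintype.card S : ℝ)
  have hN : 0 < N := by positivity
  choose t ht_pos ht using fun σ => (B σ).exists_pos_add_mul_nonneg (inv_pos.2 hN)
  set D : Alph → Matrix S S ℝ := fun σ => uniformMatrix S + t σ • B σ
  have hD0 σ i j : 0 ≤ D σ i j := ht σ i j
  have hD1 σ i : ∑ j, D σ i j = 1 := by
    simp [D, uniformMatrix, Finset.sum_add_distrib, ← Finset.mul_sum, hrow]
  have hF : (fun i => if i ∈ Finset.univ.filter (f · = 1) then 1 else 0) = f := by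
    ext i
    rcases hf i with h | h <;> simp [h]
  have hf_nonneg : 0 ≤ ∑ i, f i :=
    Finset.sum_nonneg fun i _ => by rcases hf i with h | h <;> simp [h]
  have hf_lt : ∑ i, f i < N := by
    obtain ⟨i₀, hi₀⟩ := hf0
    calc ∑ i, f i < ∑ _i : S, (1 : ℝ) :=
          Finset.sum_lt_sum (fun i _ => by rcases hf i with h | h <;> simp [h])
            ⟨i₀, Finset.mem_univ _, by simp [hi₀]⟩
      _ = N := by simp [N]
  refine ⟨PFA.ofFintype v hv0 hv1 D hD0 hD1 (Finset.univ.filter (f · = 1)), N⁻¹ * ∑ i, f i,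
    by positivity, by rwa [inv_mul_lt_iff₀ hN, mul_one], Set.ext fun w => ?_⟩
  simp only [Set.mem_ofPred_eq, PFA.val_ofFintype, hF]
  rcases eq_or_ne w [] with rfl | hw
  · simp only [gpfaVal_nil]
    constructor <;> intro h <;> nlinarith [inv_pos.2 hN]
  · have ht_prod : 0 < (w.map t).prod := List.prod_pos (by simpa using fun σ _ => ht_pos σ)
    rw [gpfaVal_uniformMatrix_add_smul hv1 hrow hcol t f hw, lt_add_iff_pos_right,
      mul_pos_iff_of_pos_left ht_prod]

lemma gpfaVal_zeroSumBorder (v : S → ℝ) (A : Alph → Matrix S S ℝ) (f : S → ℝ) (w : List Alph) :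
    gpfaVal (Sum.elim 0 (Sum.elim v 0)) (zeroSumBorder A) (Sum.elim 0 (Sum.elim f 0)) w =
      gpfaVal v A f w := by
  have key (a : Unit → ℝ) (x : S → ℝ) :
      Sum.elim a (Sum.elim x 0) ᵥ* (w.map (zeroSumBorder A)).prod ⬝ᵥ Sum.elim 0 (Sum.elim f 0) =
        x ᵥ* (w.map A).prod ⬝ᵥ f := by
    induction w generalizing a x with
    | nil => simp [sumElim_dotProduct_sumElim]
    | cons σ w ih =>
      have hstep : Sum.elim a (Sum.elim x 0) ᵥ* zeroSumBorder A σ =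
          Sum.elim (fun _ => -∑ i, x i * ∑ j, A σ i j) (Sum.elim (x ᵥ* A σ) (0 : Unit → ℝ)) := by
        ext (_ | _ | _) <;> simp [zeroSumBorder, vecMul, dotProduct, Fintype.sum_sum_type]
      simp only [List.map_cons, List.prod_cons, ← vecMul_vecMul, hstep, ih]
  simpa only [gpfaVal, dotProduct_mulVec] using key 0 v

theorem isStochasticLang_of_gpfaVal_nil_nonpos {v : S → ℝ} (hv0 : ∀ i, 0 ≤ v i)
    (hv1 : ∑ i, v i = 1) (A : Alph → Matrix S S ℝ) {f : S → ℝ} (hf : ∀ i, f i = 0 ∨ f i = 1)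
    (hnil : v ⬝ᵥ f ≤ 0) :
    IsStochasticLang {w | 0 < gpfaVal v A f w} := by
  have key := isStochasticLang_of_line_sums_eq_zero (v := Sum.elim 0 (Sum.elim v 0))
    (by rintro (_ | _ | _) <;> simp [hv0]) (by simp [Fintype.sum_sum_type, hv1])
    (zeroSumBorder_row_sum A) (zeroSumBorder_col_sum A) (f := Sum.elim 0 (Sum.elim f 0))
    (by rintro (_ | _ | _) <;> simp [hf]) ⟨.inl (), rfl⟩
    (by simpa [sumElim_dotProduct_sumElim] using hnil)
  simpa only [gpfaVal_zeroSumBorder] using key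

def adjoinFixedState (A : Alph → Matrix S S ℝ) (σ : Alph) : Matrix (S ⊕ Unit) (S ⊕ Unit) ℝ :=
  fromBlocks (A σ) 0 0 1

lemma gpfaVal_adjoinFixedState (v : S → ℝ) (A : Alph → Matrix S S ℝ) (f : S → ℝ) (c : ℝ)
    (w : List Alph) :
    gpfaVal (Sum.elim v fun _ => 1) (adjoinFixedState A) (Sum.elim f fun _ => -c) w =
      gpfaVal v A f w - c := by
  have hprod : (w.map (adjoinFixedState A)).prod = fromBlocks (w.map A).prod 0 0 1 := by
    induction w with
    | nil => simp
    | cons σ w ih => simp [adjoinFixedState, ih, fromBlocks_multiply]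
  simp [gpfaVal, hprod, fromBlocks_mulVec, sumElim_dotProduct_sumElim, sub_eq_add_neg]

def adjoinInitialState (v : S → ℝ) (A : Alph → Matrix S S ℝ) (σ : Alph) :
    Matrix (Unit ⊕ S) (Unit ⊕ S) ℝ :=
  fromBlocks 0 (of fun _ j => (v ᵥ* A σ) j) 0 (A σ)

lemma sumElim_zero_vecMul_prod_adjoinInitialState (v : S → ℝ) (A : Alph → Matrix S S ℝ)
    (x : S → ℝ) (w : List Alph) :
    Sum.elim 0 x ᵥ* (w.map (adjoinInitialState v A)).prod =
      Sum.elim (0 : Unit → ℝ) (x ᵥ* (w.map A).prod) := by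
  induction w generalizing x with
  | nil => simp
  | cons σ w ih =>
    have hstep : Sum.elim 0 x ᵥ* adjoinInitialState v A σ = Sum.elim (0 : Unit → ℝ) (x ᵥ* A σ) := by
      rw [adjoinInitialState, vecMul_fromBlocks]
      ext (_ | _) <;> simp
    simp only [List.map_cons, List.prod_cons, ← vecMul_vecMul, hstep, ih]

lemma gpfaVal_adjoinInitialState (v : S → ℝ) (A : Alph → Matrix S S ℝ) (f : S → ℝ)
    (w : List Alph) :
    gpfaVal (Sum.elim 1 0) (adjoinInitialState v A) (Sum.elim (fun _ => v ⬝ᵥ f) f) w =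
      gpfaVal v A f w := by
  cases w with
  | nil => simp [sumElim_dotProduct_sumElim]
  | cons σ w =>
    have hstep : Sum.elim 1 0 ᵥ* adjoinInitialState v A σ = Sum.elim (0 : Unit → ℝ) (v ᵥ* A σ) := by
      rw [adjoinInitialState, vecMul_fromBlocks]
      ext (_ | _) <;> simp [vecMul, dotProduct]
    simp only [gpfaVal, List.map_cons, List.prod_cons, dotProduct_mulVec, ← vecMul_vecMul, hstep,
      sumElim_zero_vecMul_prod_adjoinInitialState, sumElim_dotProduct_sumElim]
    simp

def adjoinFinalState (A : Alph → Matrix S S ℝ) (f : S → ℝ) (σ : Alph) :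
    Matrix (S ⊕ Unit) (S ⊕ Unit) ℝ :=
  fromBlocks (A σ) (of fun i _ => (A σ *ᵥ f) i) 0 0

lemma prod_adjoinFinalState_mulVec_sumElim_zero (A : Alph → Matrix S S ℝ) (f y : S → ℝ)
    (w : List Alph) :
    (w.map (adjoinFinalState A f)).prod *ᵥ Sum.elim y 0 =
      Sum.elim ((w.map A).prod *ᵥ y) (0 : Unit → ℝ) := by
  induction w with
  | nil => simp
  | cons σ w ih =>
    have hstep (z : S → ℝ) : adjoinFinalState A f σ *ᵥ Sum.elim z 0 =
        Sum.elim (A σ *ᵥ z) (0 : Unit → ℝ) := by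
      rw [adjoinFinalState, fromBlocks_mulVec]
      ext (_ | _) <;> simp
    simp only [List.map_cons, List.prod_cons, ← mulVec_mulVec, ih, hstep]

lemma gpfaVal_adjoinFinalState (v : S → ℝ) (A : Alph → Matrix S S ℝ) (f : S → ℝ)
    {w : List Alph} (hw : w ≠ []) :
    gpfaVal (Sum.elim v 0) (adjoinFinalState A f) (Sum.elim 0 fun _ => 1) w = gpfaVal v A f w := by
  obtain ⟨w, σ, rfl⟩ := (List.eq_nil_or_concat w).resolve_left hw
  have hlast : adjoinFinalState A f σ *ᵥ Sum.elim 0 (fun _ => 1) =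
      Sum.elim (A σ *ᵥ f) (0 : Unit → ℝ) := by
    rw [adjoinFinalState, fromBlocks_mulVec]
    ext (_ | _) <;> simp [mulVec, dotProduct]
  simp only [gpfaVal, List.concat_eq_append, List.map_append, List.map_singleton, List.prod_append,
    List.prod_singleton, ← mulVec_mulVec, hlast, prod_adjoinFinalState_mulVec_sumElim_zero,
    sumElim_dotProduct_sumElim, dotProduct_zero, add_zero]

theorem isStochasticLang_of_gpfaVal_nil_le (v : S → ℝ) (A : Alph → Matrix S S ℝ) (f : S → ℝ)
    {c : ℝ} (hnil : gpfaVal v A f [] ≤ c) :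
    IsStochasticLang {w | c < gpfaVal v A f w} := by
  set v₁ : S ⊕ Unit → ℝ := Sum.elim v fun _ => 1
  set f₁ : S ⊕ Unit → ℝ := Sum.elim f fun _ => -c
  set A₂ := adjoinInitialState v₁ (adjoinFixedState A)
  set f₂ : Unit ⊕ (S ⊕ Unit) → ℝ := Sum.elim (fun _ => v₁ ⬝ᵥ f₁) f₁
  have h₂ w : gpfaVal (Sum.elim 1 0) A₂ f₂ w = gpfaVal v A f w - c := by
    rw [gpfaVal_adjoinInitialState, gpfaVal_adjoinFixedState]
  have key := isStochasticLang_of_gpfaVal_nil_nonpos (v := Sum.elim (Sum.elim 1 0) 0)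
    (by rintro ((_ | _) | _) <;> simp) (by simp [Fintype.sum_sum_type])
    (adjoinFinalState A₂ f₂) (f := Sum.elim 0 fun _ => 1) (by rintro (_ | _) <;> simp)
    (by simp [sumElim_dotProduct_sumElim])
  convert key using 1
  ext w
  rcases eq_or_ne w [] with rfl | hw
  · simpa [sumElim_dotProduct_sumElim] using hnil
  · simp only [Set.mem_ofPred_eq, gpfaVal_adjoinFinalState _ _ _ hw, h₂, sub_pos]

end GeneralizedAutomaton

theorem exists_gpfaVal_eq_of_linear {Alph : Type} {V : Type*} [AddCommGroup V] [Module ℝ V]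
    [FiniteDimensional ℝ V] (T : Alph → V →ₗ[ℝ] V) (x₀ : V) (φ : V →ₗ[ℝ] ℝ) :
    ∃ (n : ℕ) (v : Fin n → ℝ) (A : Alph → Matrix (Fin n) (Fin n) ℝ) (f : Fin n → ℝ),
      ∀ w, gpfaVal v A f w = φ (w.foldl (fun x σ => T σ x) x₀) := by
  let b := Module.finBasis ℝ V
  refine ⟨_, b.repr x₀, fun σ => (LinearMap.toMatrix b b (T σ))ᵀ, fun i => φ (b i), fun w => ?_⟩
  have hrepr : b.repr x₀ ᵥ* (w.map fun σ => (LinearMap.toMatrix b b (T σ))ᵀ).prod =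
      b.repr (w.foldl (fun x σ => T σ x) x₀) := by
    induction w using List.reverseRecOn with
    | nil => simp
    | append_singleton w σ ih =>
      simp [List.foldl_append, ← vecMul_vecMul, ih, vecMul_transpose,
        LinearMap.toMatrix_mulVec_repr]
  rw [gpfaVal, dotProduct_mulVec, hrepr]
  set x := w.foldl (fun x σ => T σ x) x₀
  calc b.repr x ⬝ᵥ (fun i => φ (b i))
      = φ (∑ i, b.repr x i • b i) := by simp only [dotProduct, map_sum, map_smul, smul_eq_mul]
    _ = φ x := by rw [b.sum_repr]

namespace NQFA

variable {Alph : Type} (M : NQFA Alph)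

lemma postOp_add (σ : Alph) (X Y : Matrix (Fin M.n) (Fin M.n) ℂ) :
    M.postOp σ (X + Y) = M.postOp σ X + M.postOp σ Y := by
  simp [postOp, Matrix.mul_add, Matrix.add_mul, Finset.sum_add_distrib]

lemma postOp_smul (σ : Alph) (r : ℝ) (X : Matrix (Fin M.n) (Fin M.n) ℂ) :
    M.postOp σ (r • X) = r • M.postOp σ X := by
  simp [postOp, Finset.smul_sum]

def stepLin (σ : Alph) :
    (Matrix (Fin M.n) (Fin M.n) ℂ × ℝ) →ₗ[ℝ] (Matrix (Fin M.n) (Fin M.n) ℂ × ℝ) where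
  toFun s := (M.Pn * M.postOp σ s.1 * M.Pnᴴ, s.2 + (M.Pa * M.postOp σ s.1).trace.re)
  map_add' s t := by
    ext <;> simp [postOp_add, Matrix.mul_add, Matrix.add_mul]; ring
  map_smul' r s := by
    ext <;> simp [postOp_smul, mul_add]

lemma exists_gpfaVal_eq_accProb :
    ∃ (n : ℕ) (v : Fin n → ℝ) (A : Alph → Matrix (Fin n) (Fin n) ℝ) (f : Fin n → ℝ),
      ∀ w, gpfaVal v A f w = M.accProb w := by
  obtain ⟨n, v, A, f, hval⟩ :=
    exists_gpfaVal_eq_of_linear M.stepLin (M.rho0, 0) (LinearMap.snd ℝ _ ℝ)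
  refine ⟨n, v, A, f, fun w => ?_⟩
  have hrun := List.foldl_hom (fun s => (s.1, s.2.1)) (g₁ := M.step)
    (g₂ := fun x σ => M.stepLin σ x) (l := w) (init := (M.rho0, 0, 0)) fun _ _ => rfl
  rw [hval, hrun]
  rfl

end NQFA

theorem nqfa_unbounded_error_is_stochastic_general (Alph : Type) (M : NQFA Alph)
    (lam : ℝ) (h0 : 0 ≤ lam) :
    IsStochasticLang { w : List Alph | lam < M.accProb w } := by
  obtain ⟨n, v, A, f, hval⟩ := M.exists_gpfaVal_eq_accProb
  have hnil : gpfaVal v A f [] ≤ lam := by rw [hval]; exact h0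
  simpa only [hval] using isStochasticLang_of_gpfaVal_nil_le v A f hnil

/-- Every language recognized with unbounded error by an NQFA is stochastic. -/
theorem nqfa_unbounded_error_is_stochastic (Alph : Type) (M : NQFA Alph)
    (lam : ℝ) (h0 : 0 ≤ lam) (h1 : lam < 1) :
    IsStochasticLang { w : List Alph | lam < M.accProb w } :=
  nqfa_unbounded_error_is_stochastic_general Alph M lam h0
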